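/- arXiv:2503.10384 — 5 statements merged into one kernel-verified Lean document; each statement's English description precedes it below -/
import Mathlib

section
/- The relaxed logarithmic barrier function B(z,δ), defined piecewise as -δ·log(-z) for z < -δ and (1/2)((z+2δ)²/δ - δ) - δ·log(δ) for z ≥ -δ, is continuously differentiable on ℝ in its first argument for every fixed δ > 0. -/
theorem stmt_0 (δ : ℝ) (hδ : 0 < δ) (B : ℝ → ℝ)
    (hB : ∀ z : ℝ, B z = if z < -δ then -δ * Real.log (-z)
      else (1/2) * ((z + 2*δ)^2 / δ - δ) - δ * Real.log δ) :
    ContDiff ℝ 1 B := by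
  have hδ' : δ ≠ 0 := ne_of_gt hδ
  set f : ℝ → ℝ := fun z => -δ * Real.log (-z) with hf
  set q : ℝ → ℝ := fun z => (1/2) * ((z + 2*δ)^2 / δ - δ) - δ * Real.log δ with hq
  set g : ℝ → ℝ := fun z => if z < -δ then -δ/z else (z + 2*δ)/δ with hg
  -- derivative of the log piece
  have hfd : ∀ z : ℝ, z < 0 → HasDerivAt f (-δ/z) z := by
    intro z hz
    have h1 : HasDerivAt (fun z : ℝ => -z) (-1) z := (hasDerivAt_id z).neg
    have h2 : HasDerivAt (fun z : ℝ => Real.log (-z)) ((-z)⁻¹ * (-1)) z :=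
      (Real.hasDerivAt_log (by linarith : -z ≠ 0)).comp z h1
    have h3 := h2.const_mul (-δ)
    convert h3 using 1
    · rfl
    · rfl
    field_simp
  -- derivative of the quadratic piece
  have hqd : ∀ z : ℝ, HasDerivAt q ((z + 2*δ)/δ) z := by
    intro z
    have h1 : HasDerivAt (fun z : ℝ => (z + 2*δ)^2) (2*(z + 2*δ)) z := by
      have := ((hasDerivAt_id z).add_const (2*δ)).fun_pow 2
      simpa using this
    have h2 := (((h1.div_const δ).sub_const δ).const_mul (1/2)).sub_const (δ * Real.log δ)
    convert h2 using 1
    · rfl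
    · rfl
    field_simp
  -- values match at the junction
  have hjunction : f (-δ) = q (-δ) := by
    simp only [hf, hq, neg_neg]
    have : (-δ + 2*δ)^2 / δ = δ := by field_simp; ring
    rw [this]
    ring
  have hone : (-δ + 2*δ)/δ = 1 := by
    rw [show -δ + 2*δ = δ by ring, div_self hδ']
  have hone' : -δ/(-δ) = 1 := div_self (neg_ne_zero.mpr hδ')
  -- B has derivative g z at every z
  have hBd : ∀ z : ℝ, HasDerivAt B (g z) z := by
    intro z
    rcases lt_trichotomy z (-δ) with h | h | h
    · have hgz : g z = -δ/z := by simp [hg, h]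
      rw [hgz]
      have heq : B =ᶠ[nhds z] f := by
        filter_upwards [Iio_mem_nhds h] with x hx
        rw [hB x, if_pos (Set.mem_Iio.mp hx)]
      exact (hfd z (by linarith)).congr_of_eventuallyEq heq
    · subst h
      have hgz : g (-δ) = 1 := by
        rw [hg]; simp only [if_neg (lt_irrefl (-δ))]; exact hone
      rw [hgz]
      have hle : HasDerivWithinAt B 1 (Set.Iic (-δ)) (-δ) := by
        have h1 : HasDerivAt f (-δ/(-δ)) (-δ) := hfd (-δ) (by linarith)
        have h1' : HasDerivAt f 1 (-δ) := hone' ▸ h1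
        refine (h1'.hasDerivWithinAt).congr ?_ ?_
        · intro x hx
          rcases (Set.mem_Iic.mp hx).lt_or_eq with hx' | hx'
          · rw [hB x, if_pos hx']
          · subst hx'
            rw [hB (-δ), if_neg (lt_irrefl (-δ))]
            exact hjunction.symm
        · rw [hB (-δ)]
          simp only [lt_irrefl, if_false]
          exact hjunction.symm
      have hge : HasDerivWithinAt B 1 (Set.Ici (-δ)) (-δ) := by
        have h1 : HasDerivAt q ((-δ + 2*δ)/δ) (-δ) := hqd (-δ)
        have h1' : HasDerivAt q 1 (-δ) := hone ▸ h1
        refine (h1'.hasDerivWithinAt).congr ?_ ?_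
        · intro x hx
          rw [hB x, if_neg (not_lt.2 (Set.mem_Ici.mp hx))]
        · rw [hB (-δ), if_neg (lt_irrefl (-δ))]
      have := hle.union hge
      rw [Set.Iic_union_Ici] at this
      exact this.hasDerivAt (by simp)
    · have hgz : g z = (z + 2*δ)/δ := by simp [hg, not_lt.2 (le_of_lt h)]
      rw [hgz]
      have heq : B =ᶠ[nhds z] q := by
        filter_upwards [Ioi_mem_nhds h] with x hx
        rw [hB x, if_neg (not_lt.2 (le_of_lt (Set.mem_Ioi.mp hx)))]
      exact (hqd z).congr_of_eventuallyEq heq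
  -- g is continuous
  have hgc : Continuous g := by
    rw [continuous_iff_continuousAt]
    intro z
    rcases lt_trichotomy z (-δ) with h | h | h
    · have hc : ContinuousAt (fun z : ℝ => -δ/z) z :=
        (continuousAt_const.div continuousAt_id (ne_of_lt (by linarith : z < 0)))
      refine hc.congr ?_
      filter_upwards [Iio_mem_nhds h] with x hx
      simp only [hg]; rw [if_pos (Set.mem_Iio.mp hx)]
    · subst h
      have hle : ContinuousWithinAt g (Set.Iic (-δ)) (-δ) := by
        have hc : ContinuousWithinAt (fun z : ℝ => -δ/z) (Set.Iic (-δ)) (-δ) :=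
          (continuousAt_const.div continuousAt_id
            (ne_of_lt (by linarith : (-δ:ℝ) < 0))).continuousWithinAt
        refine hc.congr ?_ ?_
        · intro x hx
          rcases (Set.mem_Iic.mp hx).lt_or_eq with hx' | hx'
          · simp only [hg]; rw [if_pos hx']
          · subst hx'
            simp only [hg]; rw [if_neg (lt_irrefl (-δ)), hone, hone']
        · simp only [hg]; rw [if_neg (lt_irrefl (-δ)), hone, hone']
      have hge : ContinuousWithinAt g (Set.Ici (-δ)) (-δ) := by
        have hc : ContinuousWithinAt (fun z : ℝ => (z + 2*δ)/δ) (Set.Ici (-δ)) (-δ) :=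
          ((continuous_id.add continuous_const).div_const δ).continuousWithinAt
        refine hc.congr ?_ ?_
        · intro x hx
          simp only [hg]; rw [if_neg (not_lt.2 (Set.mem_Ici.mp hx))]
        · simp only [hg]; rw [if_neg (lt_irrefl (-δ))]
      have := hle.union hge
      rw [Set.Iic_union_Ici] at this
      simpa [continuousWithinAt_univ] using this
    · have hc : ContinuousAt (fun z : ℝ => (z + 2*δ)/δ) z :=
        ((continuous_id.add continuous_const).div_const δ).continuousAt
      refine hc.congr ?_
      filter_upwards [Ioi_mem_nhds h] with x hx
      simp only [hg]; rw [if_neg (not_lt.2 (le_of_lt (Set.mem_Ioi.mp hx)))]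
  -- conclude
  rw [contDiff_one_iff_deriv]
  constructor
  · exact fun z => (hBd z).differentiableAt
  · have : deriv B = g := funext fun z => (hBd z).deriv
    rw [this]
    exact hgc
end

section
/- Let 0 < δ∞ ≤ δ with ε := δ - δ∞, and define C(z) := B'(z,δ∞) - B'(z,δ). Then for all z ∈ ℝ, |C(z)| ≤ c₀ + |z|·ε/(δ·δ∞), where c₀ := max(ε/δ, 2ε/(δ + √(δ·δ∞))). -/
theorem stmt_6 (δ δinf ε : ℝ) (h1 : 0 < δinf) (h2 : δinf ≤ δ) (hε : ε = δ - δinf)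
    (Bd : ℝ → ℝ → ℝ)
    (hBd : ∀ d z : ℝ, Bd d z = if z < -d then -d / z else (z + 2*d) / d)
    (C : ℝ → ℝ) (hC : ∀ z, C z = Bd δinf z - Bd δ z) :
    ∀ z : ℝ, |C z| ≤ max (ε / δ) (2 * ε / (δ + Real.sqrt (δ * δinf))) + |z| * ε / (δ * δinf) := by
  intro z
  have hδ : 0 < δ := lt_of_lt_of_le h1 h2
  have hε0 : 0 ≤ ε := by rw [hε]; linarith
  set s := Real.sqrt (δ * δinf) with hs
  have hs0 : 0 < s := Real.sqrt_pos.mpr (by positivity)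
  have hs2 : s * s = δ * δinf := Real.mul_self_sqrt (by positivity)
  have hsδ : s ≤ δ := by nlinarith [sq_nonneg (s - δ)]
  have hzterm : 0 ≤ |z| * ε / (δ * δinf) := by positivity
  have hc0 : 0 ≤ ε / δ := by positivity
  rw [hC, hBd, hBd]
  by_cases hA : z < -δinf
  · by_cases hB : z < -δ
    · -- both barrier branch
      rw [if_pos hB, if_pos hA]
      have hz : z < 0 := by linarith
      have hval : -δinf / z - -δ / z = ε / z := by
        rw [hε]; rw [div_sub_div_same]; ring_nf
      rw [hval]
      have habs : |ε / z| = ε / (-z) := by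
        rw [abs_div, abs_of_nonneg hε0, abs_of_neg hz]
      rw [habs]
      have : ε / (-z) ≤ ε / δ := by
        apply div_le_div_of_nonneg_left hε0 hδ (by linarith)
      calc ε / (-z) ≤ ε / δ := this
        _ ≤ max (ε / δ) (2 * ε / (δ + s)) := le_max_left _ _
        _ ≤ _ := le_add_of_nonneg_right hzterm
    · -- middle case: -δ ≤ z < -δinf
      rw [if_pos hA, if_neg hB]
      push_neg at hB
      set t : ℝ := -z with ht
      have ht1 : δinf < t := by rw [ht]; linarith
      have ht2 : t ≤ δ := by rw [ht]; linarith
      have ht0 : 0 < t := lt_trans h1 ht1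
      have hz0 : z ≠ 0 := by intro h; rw [h] at hA; linarith
      have hval : -δinf / z - (z + 2*δ) / δ = δinf / t + t / δ - 2 := by
        field_simp [ht]
        ring
      rw [hval]
      have hden : 0 < δ + s := by linarith
      have key : 2 * ε / (δ + s) = 2 * (δ - s) / δ := by
        rw [div_eq_div_iff hden.ne' hδ.ne']
        nlinarith
      have hprod : (δinf / t + t / δ - 2) * (t * δ) = δinf * δ + t * t - 2 * t * δ := by
        field_simp
      have hupper : δinf / t + t / δ - 2 ≤ 0 := by
        have hmul : (δinf / t + t / δ - 2) * (t * δ) ≤ 0 * (t * δ) := by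
          rw [hprod, zero_mul]
          nlinarith [mul_nonpos_of_nonneg_of_nonpos (le_of_lt (sub_pos.mpr ht1)) (sub_nonpos.mpr ht2)]
        exact le_of_mul_le_mul_right hmul (mul_pos ht0 hδ)
      have hlower : -(2 * ε / (δ + s)) ≤ δinf / t + t / δ - 2 := by
        rw [key]
        have hmul : (-(2 * (δ - s) / δ)) * (t * δ) ≤ (δinf / t + t / δ - 2) * (t * δ) := by
          rw [hprod]
          have hlhs : (-(2 * (δ - s) / δ)) * (t * δ) = -(2 * (δ - s) * t) := by
            field_simp
          rw [hlhs]
          nlinarith [sq_nonneg (t - s)]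
        exact le_of_mul_le_mul_right hmul (mul_pos ht0 hδ)
      have habs : |δinf / t + t / δ - 2| ≤ 2 * ε / (δ + s) := by
        rw [abs_le]; constructor
        · exact hlower
        · exact le_trans hupper (by positivity)
      calc |δinf / t + t / δ - 2| ≤ 2 * ε / (δ + s) := habs
        _ ≤ max (ε / δ) (2 * ε / (δ + s)) := le_max_right _ _
        _ ≤ _ := le_add_of_nonneg_right hzterm
  · -- both linear branch
    have hB : ¬ z < -δ := by push_neg at hA ⊢; linarith
    rw [if_neg hA, if_neg hB]
    have hval : (z + 2*δinf) / δinf - (z + 2*δ) / δ = z * ε / (δ * δinf) := by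
      rw [hε]; field_simp; ring
    rw [hval]
    have habs : |z * ε / (δ * δinf)| = |z| * ε / (δ * δinf) := by
      rw [abs_div, abs_mul, abs_of_nonneg hε0, abs_of_pos (by positivity : (0:ℝ) < δ * δinf)]
    rw [habs]
    have : 0 ≤ max (ε / δ) (2 * ε / (δ + s)) := le_trans hc0 (le_max_left _ _)
    linarith
end

section
/- Let g(x) = aᵀx + b be an affine function on ℝ^d with a ∈ ℝ^d, b ∈ ℝ, and for δ > 0 define h(x) := B(g(x), δ) where B is the relaxed logarithmic barrier. Then h is convex and twice continuously differentiable, and its Hessian satisfies ∇²h(x) ⪯ (‖a‖²/δ)·I for all x ∈ ℝ^d. -/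
open RealInnerProductSpace

noncomputable def Bfun (δ : ℝ) (z : ℝ) : ℝ :=
  if z < -δ then -δ * Real.log (-z) else (1/2) * ((z + 2*δ)^2 / δ - δ) - δ * Real.log δ

noncomputable def B1 (δ : ℝ) (z : ℝ) : ℝ := if z < -δ then -δ / z else (z + 2*δ) / δ

noncomputable def B2 (δ : ℝ) (z : ℝ) : ℝ := if z < -δ then δ / z^2 else 1/δ

lemma hasDerivAt_f1 {δ z : ℝ} (hz : z < 0) :
    HasDerivAt (fun z => -δ * Real.log (-z)) (-δ / z) z := by
  have h1 : HasDerivAt (fun z : ℝ => Real.log (-z)) ((-z)⁻¹ * (-1)) z :=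
    (Real.hasDerivAt_log (by linarith)).comp z (hasDerivAt_neg z)
  have h2 := h1.const_mul (-δ)
  have heq : -δ * ((-z)⁻¹ * (-1)) = -δ / z := by field_simp
  exact heq ▸ h2

lemma hasDerivAt_f2 {δ z : ℝ} (hδ : 0 < δ) :
    HasDerivAt (fun z => (1/2) * ((z + 2*δ)^2 / δ - δ) - δ * Real.log δ) ((z + 2*δ) / δ) z := by
  have h1 : HasDerivAt (fun z : ℝ => (z + 2*δ)^2) ((2:ℕ) * (z + 2*δ)^(2-1) * 1) z :=
    ((hasDerivAt_id z).add_const (2*δ)).pow 2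
  have h2 := (((h1.div_const δ).sub_const δ).const_mul (1/2 : ℝ)).sub_const (δ * Real.log δ)
  have heq : (1/2 : ℝ) * ((2:ℕ) * (z + 2*δ)^(2-1) * 1 / δ) = (z + 2*δ) / δ := by
    push_cast; ring
  exact heq ▸ h2

lemma hasDerivAt_g1 {δ z : ℝ} (hz : z < 0) :
    HasDerivAt (fun z => -δ / z) (δ / z^2) z := by
  have h1 : HasDerivAt (fun z : ℝ => z⁻¹) (-(z^2)⁻¹) z := hasDerivAt_inv (by linarith)
  have h2 := h1.const_mul (-δ)
  have heq : -δ * -(z^2)⁻¹ = δ / z^2 := by field_simp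
  have hfun : (fun z : ℝ => -δ * z⁻¹) = fun z : ℝ => -δ / z := by
    funext w; rw [div_eq_mul_inv]
  rw [← hfun, ← heq]
  exact h2

lemma hasDerivAt_g2 {δ z : ℝ} (hδ : 0 < δ) :
    HasDerivAt (fun z => (z + 2*δ) / δ) (1/δ) z := by
  have h2 := ((hasDerivAt_id z).add_const (2*δ)).div_const δ
  have heq : (1:ℝ)/δ = 1/δ := rfl
  simpa using h2

lemma Bfun_eq_f1_on {δ : ℝ} (hδ : 0 < δ) {z : ℝ} (hz : z ≤ -δ) :
    Bfun δ z = -δ * Real.log (-z) := by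
  rcases lt_or_eq_of_le hz with hlt | heq
  · simp [Bfun, hlt]
  · subst heq
    simp only [Bfun, if_neg (lt_irrefl _)]
    rw [neg_neg]
    have h1 : (-δ + 2*δ) = δ := by ring
    rw [h1]
    have h2 : δ^2/δ = δ := by rw [sq]; field_simp
    rw [h2]
    ring

lemma Bfun_eq_f2_on {δ : ℝ} {z : ℝ} (hz : -δ ≤ z) :
    Bfun δ z = (1/2) * ((z + 2*δ)^2 / δ - δ) - δ * Real.log δ := by
  simp [Bfun, not_lt.mpr hz]

lemma B1_eq_g1_on {δ : ℝ} (hδ : 0 < δ) {z : ℝ} (hz : z ≤ -δ) :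
    B1 δ z = -δ / z := by
  rcases lt_or_eq_of_le hz with hlt | heq
  · simp [B1, hlt]
  · subst heq
    simp only [B1, if_neg (lt_irrefl _)]
    have h1 : (-δ + 2*δ) = δ := by ring
    rw [h1]
    field_simp

lemma B1_eq_g2_on {δ : ℝ} {z : ℝ} (hz : -δ ≤ z) :
    B1 δ z = (z + 2*δ) / δ := by
  simp [B1, not_lt.mpr hz]

lemma hasDerivAt_Bfun {δ : ℝ} (hδ : 0 < δ) (z : ℝ) :
    HasDerivAt (Bfun δ) (B1 δ z) z := by
  rcases lt_trichotomy z (-δ) with hz | hz | hz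
  · have hz0 : z < 0 := by linarith
    have h1 := hasDerivAt_f1 (δ := δ) hz0
    rw [show B1 δ z = -δ / z from by simp [B1, hz]]
    apply h1.congr_of_eventuallyEq
    filter_upwards [eventually_lt_nhds hz] with w hw
    simp [Bfun, hw]
  · subst hz
    have hL : HasDerivWithinAt (Bfun δ) (B1 δ (-δ)) (Set.Iic (-δ)) (-δ) := by
      have h1 := (hasDerivAt_f1 (δ := δ) (z := -δ) (by linarith)).hasDerivWithinAt (s := Set.Iic (-δ))
      rw [B1_eq_g1_on hδ le_rfl]
      exact h1.congr (fun w hw => Bfun_eq_f1_on hδ hw) (Bfun_eq_f1_on hδ le_rfl)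
    have hR : HasDerivWithinAt (Bfun δ) (B1 δ (-δ)) (Set.Ici (-δ)) (-δ) := by
      have h1 := (hasDerivAt_f2 (δ := δ) (z := -δ) hδ).hasDerivWithinAt (s := Set.Ici (-δ))
      rw [B1_eq_g2_on le_rfl]
      exact h1.congr (fun w hw => Bfun_eq_f2_on hw) (Bfun_eq_f2_on le_rfl)
    have hU := hL.union hR
    rwa [Set.Iic_union_Ici, hasDerivWithinAt_univ] at hU
  · have h1 := hasDerivAt_f2 (δ := δ) (z := z) hδ
    rw [B1_eq_g2_on (le_of_lt hz)]
    apply h1.congr_of_eventuallyEq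
    filter_upwards [eventually_gt_nhds hz] with w hw
    exact Bfun_eq_f2_on (le_of_lt hw)

lemma hasDerivAt_B1 {δ : ℝ} (hδ : 0 < δ) (z : ℝ) :
    HasDerivAt (B1 δ) (B2 δ z) z := by
  rcases lt_trichotomy z (-δ) with hz | hz | hz
  · have hz0 : z < 0 := by linarith
    have h1 := hasDerivAt_g1 (δ := δ) hz0
    rw [show B2 δ z = δ / z^2 from by simp [B2, hz]]
    apply h1.congr_of_eventuallyEq
    filter_upwards [eventually_lt_nhds hz] with w hw
    simp [B1, hw]
  · subst hz
    have hB2 : B2 δ (-δ) = 1/δ := by simp [B2]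
    have hL : HasDerivWithinAt (B1 δ) (B2 δ (-δ)) (Set.Iic (-δ)) (-δ) := by
      have h1 := (hasDerivAt_g1 (δ := δ) (z := -δ) (by linarith)).hasDerivWithinAt (s := Set.Iic (-δ))
      rw [hB2, show (1/δ : ℝ) = δ / (-δ)^2 from by rw [neg_sq, sq]; field_simp]
      exact h1.congr (fun w hw => B1_eq_g1_on hδ hw) (B1_eq_g1_on hδ le_rfl)
    have hR : HasDerivWithinAt (B1 δ) (B2 δ (-δ)) (Set.Ici (-δ)) (-δ) := by
      have h1 := (hasDerivAt_g2 (δ := δ) (z := -δ) hδ).hasDerivWithinAt (s := Set.Ici (-δ))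
      rw [hB2]
      exact h1.congr (fun w hw => B1_eq_g2_on hw) (B1_eq_g2_on le_rfl)
    have hU := hL.union hR
    rwa [Set.Iic_union_Ici, hasDerivWithinAt_univ] at hU
  · have h1 := hasDerivAt_g2 (δ := δ) (z := z) hδ
    rw [show B2 δ z = 1/δ from by simp [B2, not_lt.mpr (le_of_lt hz)]]
    apply h1.congr_of_eventuallyEq
    filter_upwards [eventually_gt_nhds hz] with w hw
    exact B1_eq_g2_on (le_of_lt hw)

lemma continuous_B2 {δ : ℝ} (hδ : 0 < δ) : Continuous (B2 δ) := by
  have hrepr : B2 δ = fun z => δ / (min z (-δ))^2 := by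
    funext z
    unfold B2
    split
    · rename_i hz; rw [min_eq_left hz.le]
    · rename_i hz
      rw [min_eq_right (not_lt.1 hz), neg_sq, sq]
      field_simp
  rw [hrepr]
  apply continuous_const.div
  · exact (continuous_id.min continuous_const).pow 2
  · intro z
    have h1 : min z (-δ) ≤ -δ := min_le_right _ _
    have h2 : min z (-δ) < 0 := lt_of_le_of_lt h1 (by linarith)
    exact pow_ne_zero 2 (ne_of_lt h2)

lemma deriv_Bfun {δ : ℝ} (hδ : 0 < δ) : deriv (Bfun δ) = B1 δ :=
  funext fun z => (hasDerivAt_Bfun hδ z).deriv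

lemma deriv_B1 {δ : ℝ} (hδ : 0 < δ) : deriv (B1 δ) = B2 δ :=
  funext fun z => (hasDerivAt_B1 hδ z).deriv

lemma contDiff_Bfun {δ : ℝ} (hδ : 0 < δ) : ContDiff ℝ 2 (Bfun δ) := by
  rw [show (2 : WithTop ℕ∞) = 1 + 1 from rfl, contDiff_succ_iff_deriv]
  refine ⟨fun z => (hasDerivAt_Bfun hδ z).differentiableAt, by simp, ?_⟩
  rw [deriv_Bfun hδ, contDiff_one_iff_deriv, deriv_B1 hδ]
  exact ⟨fun z => (hasDerivAt_B1 hδ z).differentiableAt, continuous_B2 hδ⟩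

lemma B2_nonneg {δ : ℝ} (hδ : 0 < δ) (z : ℝ) : 0 ≤ B2 δ z := by
  unfold B2
  split
  · positivity
  · positivity

lemma B2_le {δ : ℝ} (hδ : 0 < δ) (z : ℝ) : B2 δ z ≤ 1/δ := by
  unfold B2
  split
  · rename_i hz
    rw [div_le_div_iff₀ (by nlinarith) hδ]
    nlinarith
  · exact le_refl _

lemma convexOn_Bfun {δ : ℝ} (hδ : 0 < δ) : ConvexOn ℝ Set.univ (Bfun δ) := by
  apply convexOn_univ_of_deriv2_nonneg
  · exact fun z => (hasDerivAt_Bfun hδ z).differentiableAt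
  · rw [deriv_Bfun hδ]
    exact fun z => (hasDerivAt_B1 hδ z).differentiableAt
  · intro z
    simp only [Function.iterate_succ, Function.iterate_zero, Function.comp_apply, id_eq]
    rw [deriv_Bfun hδ, deriv_B1 hδ]
    exact B2_nonneg hδ z

open RealInnerProductSpace in
theorem stmt_10 (d : ℕ) (δ : ℝ) (hδ : 0 < δ)
    (a : EuclideanSpace ℝ (Fin d)) (b : ℝ)
    (B : ℝ → ℝ)
    (hB : ∀ z : ℝ, B z = if z < -δ then -δ * Real.log (-z)
      else (1/2) * ((z + 2*δ)^2 / δ - δ) - δ * Real.log δ)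
    (g : EuclideanSpace ℝ (Fin d) → ℝ) (hg : ∀ x, g x = ⟪a, x⟫ + b)
    (h : EuclideanSpace ℝ (Fin d) → ℝ) (hh : ∀ x, h x = B (g x)) :
    ConvexOn ℝ Set.univ h ∧ ContDiff ℝ 2 h ∧
    (∀ (x v : EuclideanSpace ℝ (Fin d)),
      iteratedFDeriv ℝ 2 h x ![v, v] ≤ (‖a‖^2 / δ) * ‖v‖^2) := by
  set L : EuclideanSpace ℝ (Fin d) →L[ℝ] ℝ := innerSL ℝ a with hL
  have hBeq : B = Bfun δ := funext fun z => (hB z).trans rfl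
  have hgL : ∀ x, g x = L x + b := fun x => hg x
  have hgfun : g = fun x => L x + b := funext hgL
  have hgfd : ∀ x, HasFDerivAt g L x := by
    intro x
    rw [hgfun]
    exact (L.hasFDerivAt).add_const b
  have hheq : h = (Bfun δ) ∘ g := funext fun x => by rw [hh x, hBeq]; rfl
  have hfd1 : ∀ x, HasFDerivAt h (B1 δ (g x) • L) x := by
    intro x
    rw [hheq]
    exact (hasDerivAt_Bfun hδ (g x)).comp_hasFDerivAt x (hgfd x)
  have hfderiv1 : fderiv ℝ h = fun x => B1 δ (g x) • L := funext fun x => (hfd1 x).fderiv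
  have hfd2 : ∀ x, HasFDerivAt (fun x => B1 δ (g x) • L)
      (((B2 δ (g x)) • L).smulRight L) x := by
    intro x
    have hc : HasFDerivAt (fun x => B1 δ (g x)) ((B2 δ (g x)) • L) x :=
      (hasDerivAt_B1 hδ (g x)).comp_hasFDerivAt x (hgfd x)
    exact hc.smul_const L
  refine ⟨?_, ?_, ?_⟩
  · refine ⟨convex_univ, ?_⟩
    intro x hx y hy s t hs ht hst
    have hgaff : g (s • x + t • y) = s * g x + t * g y := by
      simp only [hg, inner_add_right, real_inner_smul_right]
      linear_combination (-b) * hst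
    have key := (convexOn_Bfun hδ).2 (Set.mem_univ (g x)) (Set.mem_univ (g y)) hs ht hst
    simp only [hheq, Function.comp_apply, hgaff, smul_eq_mul]
    simpa using key
  · rw [hheq, hgfun]
    exact (contDiff_Bfun hδ).comp (L.contDiff.add contDiff_const)
  · intro x v
    rw [iteratedFDeriv_two_apply]
    have h2d : fderiv ℝ (fderiv ℝ h) x = ((B2 δ (g x)) • L).smulRight L := by
      rw [hfderiv1]
      exact (hfd2 x).fderiv
    rw [h2d]
    simp only [Matrix.cons_val_zero, Matrix.cons_val_one, Matrix.head_cons,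
      ContinuousLinearMap.smulRight_apply, ContinuousLinearMap.smul_apply, smul_eq_mul, hL,
      innerSL_apply_apply]
    have hCS : ⟪a, v⟫ * ⟪a, v⟫ ≤ ‖a‖^2 * ‖v‖^2 := by
      have hc := real_inner_mul_inner_self_le a v
      rwa [real_inner_self_eq_norm_sq, real_inner_self_eq_norm_sq] at hc
    have h1 := B2_nonneg hδ (g x)
    have h2 := B2_le hδ (g x)
    calc B2 δ (g x) * ⟪a, v⟫ * ⟪a, v⟫ ≤ (1/δ) * (‖a‖^2 * ‖v‖^2) := by nlinarith
    _ = ‖a‖^2 / δ * ‖v‖^2 := by ring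
end

section
/- (Robbins–Siegmund lemma) Let (R_k), (P_k), (Q_k) be sequences of nonnegative random variables adapted to a filtration (F_k), such that Σ_k Q_k < ∞ almost surely and E[R_{k+1} | F_k] ≤ R_k - P_k + Q_k for all k. Then almost surely Σ_k P_k < ∞ and lim_{k→∞} R_k exists and is finite. -/
open MeasureTheory Filter Topology
open scoped ENNReal NNReal

section RobbinsSiegmundAux
variable {Ω : Type*} {R P Q : ℕ → Ω → ℝ} {c : ℕ} {ω : Ω}

noncomputable def rsPsum (Q : ℕ → Ω → ℝ) (k : ℕ) (ω : Ω) : ℝ := ∑ j ∈ Finset.range k, Q j ω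

noncomputable def rsChi (Q : ℕ → Ω → ℝ) (c : ℕ) (j : ℕ) : Ω → ℝ :=
  ({ω | rsPsum Q (j+1) ω ≤ c}).indicator (fun _ => 1)

noncomputable def rsY (R P Q : ℕ → Ω → ℝ) (k : ℕ) (ω : Ω) : ℝ :=
  R k ω + rsPsum P k ω - rsPsum Q k ω

noncomputable def rsZ (R P Q : ℕ → Ω → ℝ) (c : ℕ) (k : ℕ) (ω : Ω) : ℝ :=
  rsY R P Q 0 ω + ∑ j ∈ Finset.range k,
    rsChi Q c j ω * (rsY R P Q (j+1) ω - rsY R P Q j ω)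

lemma rsChi_nonneg (Q : ℕ → Ω → ℝ) (c j : ℕ) (ω : Ω) : 0 ≤ rsChi Q c j ω := by
  unfold rsChi; classical
  rw [Set.indicator_apply]; split <;> norm_num

lemma rsChi_le_one (Q : ℕ → Ω → ℝ) (c j : ℕ) (ω : Ω) : rsChi Q c j ω ≤ 1 := by
  unfold rsChi; classical
  rw [Set.indicator_apply]; split <;> norm_num

lemma rsZ_succ (R P Q : ℕ → Ω → ℝ) (c k : ℕ) (ω : Ω) :
    rsZ R P Q c (k+1) ω = rsZ R P Q c k ω
      + rsChi Q c k ω * (rsY R P Q (k+1) ω - rsY R P Q k ω) := by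
  unfold rsZ; rw [Finset.sum_range_succ]; ring

lemma rsPsum_mono (hQ0 : ∀ k ω, 0 ≤ Q k ω) {m n : ℕ} (h : m ≤ n) :
    rsPsum Q m ω ≤ rsPsum Q n ω := by
  unfold rsPsum
  exact Finset.sum_le_sum_of_subset_of_nonneg (Finset.range_subset_range.2 h)
    (fun i _ _ => hQ0 i ω)

lemma rsChi_of_le {j : ℕ} (h : rsPsum Q (j+1) ω ≤ c) : rsChi Q c j ω = 1 := by
  unfold rsChi; exact Set.indicator_of_mem h (fun _ => (1:ℝ))

lemma rsZ_eq_rsY (hQ0 : ∀ k ω, 0 ≤ Q k ω) :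
    ∀ k, rsPsum Q (k+1) ω ≤ c → rsZ R P Q c k ω = rsY R P Q k ω := by
  intro k
  induction k with
  | zero => intro _; simp [rsZ]
  | succ k ih =>
    intro h
    have hk : rsPsum Q (k+1) ω ≤ c := le_trans (rsPsum_mono hQ0 (by omega)) h
    rw [rsZ_succ, ih hk, rsChi_of_le hk]; ring

lemma rsY_lb (hR0 : ∀ k ω, 0 ≤ R k ω) (hP0 : ∀ k ω, 0 ≤ P k ω) (k : ℕ) :
    -rsPsum Q k ω ≤ rsY R P Q k ω := by
  unfold rsY
  have : 0 ≤ rsPsum P k ω := Finset.sum_nonneg fun i _ => hP0 i ω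
  linarith [hR0 k ω]

lemma rsZ_lb (hR0 : ∀ k ω, 0 ≤ R k ω) (hP0 : ∀ k ω, 0 ≤ P k ω)
    (hQ0 : ∀ k ω, 0 ≤ Q k ω) : ∀ k, -(c:ℝ) ≤ rsZ R P Q c k ω := by
  intro k
  induction k with
  | zero =>
    have h0 : rsZ R P Q c 0 ω = rsY R P Q 0 ω := by simp [rsZ]
    rw [h0]
    refine le_trans ?_ (rsY_lb hR0 hP0 0)
    simp [rsPsum]
  | succ k ih =>
    rw [rsZ_succ]
    rcases le_or_gt (rsPsum Q (k+1) ω) c with h | h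
    · rw [rsZ_eq_rsY hQ0 k h, rsChi_of_le h, one_mul]
      have h1 := rsY_lb (R := R) (P := P) (Q := Q) (ω := ω) hR0 hP0 (k+1)
      have h2 : -(c:ℝ) ≤ rsY R P Q (k+1) ω := le_trans (by linarith) h1
      linarith
    · have hchi : rsChi Q c k ω = 0 := Set.indicator_of_notMem (by simpa using h.not_ge) _
      rw [hchi]; simpa using ih

end RobbinsSiegmundAux

open MeasureTheory Filter in
theorem stmt_14 {Ω : Type*} {m0 : MeasurableSpace Ω}
    (μ : Measure Ω) [IsProbabilityMeasure μ]
    (ℱ : Filtration ℕ m0)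
    (R P Q : ℕ → Ω → ℝ)
    (hR0 : ∀ k ω, 0 ≤ R k ω) (hP0 : ∀ k ω, 0 ≤ P k ω) (hQ0 : ∀ k ω, 0 ≤ Q k ω)
    (hRadapt : Adapted ℱ R) (hPadapt : Adapted ℱ P) (hQadapt : Adapted ℱ Q)
    (hRint : ∀ k, Integrable (R k) μ) (hPint : ∀ k, Integrable (P k) μ)
    (hQint : ∀ k, Integrable (Q k) μ)
    (hQsum : ∀ᵐ ω ∂μ, Summable fun k => Q k ω)
    (hrec : ∀ k, μ[R (k+1) | ℱ k] ≤ᵐ[μ] fun ω => R k ω - P k ω + Q k ω) :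
    ∀ᵐ ω ∂μ, (Summable fun k => P k ω) ∧
      ∃ l : ℝ, Tendsto (fun k => R k ω) atTop (nhds l) := by
  classical
  -- measurability of partial sums
  have hpsum_sm : ∀ (X : ℕ → Ω → ℝ), Adapted ℱ X → ∀ (n k : ℕ), n ≤ k + 1 →
      StronglyMeasurable[ℱ k] (rsPsum X n) := by
    intro X hX n k hnk
    induction n with
    | zero =>
      have h0 : rsPsum X 0 = fun _ => (0:ℝ) := by funext ω; simp [rsPsum]
      rw [h0]; exact stronglyMeasurable_const
    | succ n ih =>
      have he : rsPsum X (n+1) = fun ω => rsPsum X n ω + X n ω :=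
        funext fun ω => Finset.sum_range_succ _ _
      rw [he]
      exact (ih (by omega)).add ((hX n).stronglyMeasurable.mono (ℱ.mono (by omega)))
  have hpsum_int : ∀ (X : ℕ → Ω → ℝ), (∀ k, Integrable (X k) μ) → ∀ n,
      Integrable (rsPsum X n) μ := by
    intro X hX n
    exact integrable_finset_sum _ (fun i _ => hX i)
  -- Y facts
  have hYm : ∀ k, StronglyMeasurable[ℱ k] (rsY R P Q k) := by
    intro k
    exact ((hRadapt k).stronglyMeasurable.add (hpsum_sm P hPadapt k k (by omega))).sub
      (hpsum_sm Q hQadapt k k (by omega))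
  have hYint : ∀ k, Integrable (rsY R P Q k) μ := by
    intro k
    exact ((hRint k).add (hpsum_int P hPint k)).sub (hpsum_int Q hQint k)
  -- the supermartingale inequality for Y
  have hYsuper : ∀ k, μ[rsY R P Q (k+1) | ℱ k] ≤ᵐ[μ] rsY R P Q k := by
    intro k
    have hg_sm : StronglyMeasurable[ℱ k]
        (fun ω => rsPsum P (k+1) ω - rsPsum Q (k+1) ω) :=
      (hpsum_sm P hPadapt (k+1) k le_rfl).sub (hpsum_sm Q hQadapt (k+1) k le_rfl)
    have hg_int : Integrable (fun ω => rsPsum P (k+1) ω - rsPsum Q (k+1) ω) μ :=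
      (hpsum_int P hPint (k+1)).sub (hpsum_int Q hQint (k+1))
    have hdecomp : rsY R P Q (k+1)
        = R (k+1) + fun ω => rsPsum P (k+1) ω - rsPsum Q (k+1) ω := by
      funext ω; simp [rsY]; ring
    have h1 : μ[rsY R P Q (k+1) | ℱ k]
        =ᵐ[μ] μ[R (k+1) | ℱ k] + μ[(fun ω => rsPsum P (k+1) ω - rsPsum Q (k+1) ω) | ℱ k] := by
      rw [hdecomp]; exact condExp_add (hRint _) hg_int _
    have h2 : μ[(fun ω => rsPsum P (k+1) ω - rsPsum Q (k+1) ω) | ℱ k]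
        = fun ω => rsPsum P (k+1) ω - rsPsum Q (k+1) ω :=
      condExp_of_stronglyMeasurable (ℱ.le k) hg_sm hg_int
    filter_upwards [h1, hrec k] with ω hω1 hω2
    rw [hω1, Pi.add_apply]
    have h2ω : (μ[(fun ω => rsPsum P (k+1) ω - rsPsum Q (k+1) ω) | ℱ k]) ω
        = rsPsum P (k+1) ω - rsPsum Q (k+1) ω := by rw [h2]
    have hP' : rsPsum P (k+1) ω = rsPsum P k ω + P k ω := Finset.sum_range_succ _ _
    have hQ' : rsPsum Q (k+1) ω = rsPsum Q k ω + Q k ω := Finset.sum_range_succ _ _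
    unfold rsY
    rw [h2ω, hP', hQ']
    linarith
  -- Everything about Z, for each c
  have key : ∀ c : ℕ, ∀ᵐ ω ∂μ,
      ∃ l : ℝ, Tendsto (fun k => rsZ R P Q c k ω) atTop (𝓝 l) := by
    intro c
    have hchim : ∀ j, StronglyMeasurable[ℱ j] (rsChi Q c j) := by
      intro j
      refine StronglyMeasurable.indicator stronglyMeasurable_const ?_
      exact (hpsum_sm Q hQadapt (j+1) j le_rfl).measurable measurableSet_Iic
    have hchibdd : ∀ j ω, ‖rsChi Q c j ω‖ ≤ 1 := by
      intro j ω
      rw [Real.norm_eq_abs, abs_le]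
      exact ⟨by linarith [rsChi_nonneg Q c j ω], rsChi_le_one Q c j ω⟩
    have hchiYint : ∀ j k, Integrable (rsChi Q c j * rsY R P Q k) μ := by
      intro j k
      exact (hYint k).bdd_mul ((hchim j).mono (ℱ.le j)).aestronglyMeasurable
        (Filter.Eventually.of_forall (hchibdd j))
    have hZm : ∀ k, StronglyMeasurable[ℱ k] (rsZ R P Q c k) := by
      intro k
      refine StronglyMeasurable.add ((hYm 0).mono (ℱ.mono (Nat.zero_le k))) ?_
      refine Finset.stronglyMeasurable_fun_sum _ (fun j hj => ?_)
      have hjk : j + 1 ≤ k := Finset.mem_range.1 hj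
      exact ((hchim j).mono (ℱ.mono (by omega))).mul
        (((hYm (j+1)).mono (ℱ.mono hjk)).sub ((hYm j).mono (ℱ.mono (by omega))))
    have hZint : ∀ k, Integrable (rsZ R P Q c k) μ := by
      intro k
      refine Integrable.add (hYint 0) ?_
      refine integrable_finset_sum _ (fun j _ => ?_)
      have : (fun ω => rsChi Q c j ω * (rsY R P Q (j+1) ω - rsY R P Q j ω))
          = rsChi Q c j * rsY R P Q (j+1) - rsChi Q c j * rsY R P Q j := by
        funext ω; simp [mul_sub]
      rw [this]
      exact (hchiYint j (j+1)).sub (hchiYint j j)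
    have hZadapt : Adapted ℱ (rsZ R P Q c) := fun k => (hZm k).measurable
    -- supermartingale inequality for Z
    have hZsuper : ∀ k, μ[rsZ R P Q c (k+1) | ℱ k] ≤ᵐ[μ] rsZ R P Q c k := by
      intro k
      have hsplit : rsZ R P Q c (k+1)
          = (fun ω => rsZ R P Q c k ω - rsChi Q c k ω * rsY R P Q k ω)
            + rsChi Q c k * rsY R P Q (k+1) := by
        funext ω
        simp only [Pi.add_apply, Pi.mul_apply]
        rw [rsZ_succ]; ring
      have h1int : Integrable
          (fun ω => rsZ R P Q c k ω - rsChi Q c k ω * rsY R P Q k ω) μ :=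
        (hZint k).sub (hchiYint k k)
      have h1sm : StronglyMeasurable[ℱ k]
          (fun ω => rsZ R P Q c k ω - rsChi Q c k ω * rsY R P Q k ω) :=
        (hZm k).sub ((hchim k).mul (hYm k))
      have hadd : μ[rsZ R P Q c (k+1) | ℱ k]
          =ᵐ[μ] μ[(fun ω => rsZ R P Q c k ω - rsChi Q c k ω * rsY R P Q k ω) | ℱ k]
            + μ[rsChi Q c k * rsY R P Q (k+1) | ℱ k] := by
        rw [hsplit]; exact condExp_add h1int (hchiYint k (k+1)) _
      have heq1 : μ[(fun ω => rsZ R P Q c k ω - rsChi Q c k ω * rsY R P Q k ω) | ℱ k]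
          = fun ω => rsZ R P Q c k ω - rsChi Q c k ω * rsY R P Q k ω :=
        condExp_of_stronglyMeasurable (ℱ.le k) h1sm h1int
      have heq2 : μ[rsChi Q c k * rsY R P Q (k+1) | ℱ k]
          =ᵐ[μ] rsChi Q c k * μ[rsY R P Q (k+1) | ℱ k] :=
        condExp_stronglyMeasurable_mul_of_bound (ℱ.le k) (hchim k) (hYint (k+1)) 1
          (Filter.Eventually.of_forall (hchibdd k))
      filter_upwards [hadd, heq2, hYsuper k] with ω h1 h2 h3
      rw [h1, Pi.add_apply, h2, Pi.mul_apply]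
      have heq1ω : (μ[(fun ω => rsZ R P Q c k ω - rsChi Q c k ω * rsY R P Q k ω) | ℱ k]) ω
          = rsZ R P Q c k ω - rsChi Q c k ω * rsY R P Q k ω := by rw [heq1]
      rw [heq1ω]
      have hchi0 := rsChi_nonneg Q c k ω
      linarith [mul_le_mul_of_nonneg_left h3 hchi0]
    have hZsuperM : Supermartingale (rsZ R P Q c) ℱ μ :=
      supermartingale_nat hZm hZint hZsuper
    -- mean bound
    have hZmean : ∀ k, ∫ ω, rsZ R P Q c k ω ∂μ ≤ ∫ ω, rsZ R P Q c 0 ω ∂μ := by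
      intro k
      induction k with
      | zero => exact le_rfl
      | succ k ih =>
        calc ∫ ω, rsZ R P Q c (k+1) ω ∂μ
            = ∫ ω, (μ[rsZ R P Q c (k+1) | ℱ k]) ω ∂μ := (integral_condExp (ℱ.le k)).symm
          _ ≤ ∫ ω, rsZ R P Q c k ω ∂μ :=
              integral_mono_ae integrable_condExp (hZint k) (hZsuper k)
          _ ≤ _ := ih
    have hZ0 : ∫ ω, rsZ R P Q c 0 ω ∂μ = ∫ ω, R 0 ω ∂μ := by
      congr 1; funext ω; simp [rsZ, rsY, rsPsum]
    set B : ℝ := 2 * c + ∫ ω, R 0 ω ∂μ with hB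
    have hnormbd : ∀ k, ∫ ω, ‖rsZ R P Q c k ω‖ ∂μ ≤ B := by
      intro k
      have hpt : ∀ ω, ‖rsZ R P Q c k ω‖ ≤ 2 * c + rsZ R P Q c k ω := by
        intro ω
        have hlb := rsZ_lb (R := R) (P := P) (Q := Q) (c := c) (ω := ω) hR0 hP0 hQ0 k
        rw [Real.norm_eq_abs]
        have hc0 : (0:ℝ) ≤ 2 * c := by positivity
        rcases abs_cases (rsZ R P Q c k ω) with ⟨h, _⟩ | ⟨h, _⟩ <;> rw [h] <;> linarith
      calc ∫ ω, ‖rsZ R P Q c k ω‖ ∂μ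
          ≤ ∫ ω, (2 * c + rsZ R P Q c k ω) ∂μ :=
            integral_mono (hZint k).norm ((integrable_const _).add (hZint k))
              (fun ω => hpt ω)
        _ = 2 * c + ∫ ω, rsZ R P Q c k ω ∂μ := by
            rw [integral_add (integrable_const _) (hZint k), integral_const]
            simp
        _ ≤ 2 * c + ∫ ω, rsZ R P Q c 0 ω ∂μ := by linarith [hZmean k]
        _ = B := by rw [hZ0]
    have hbddZ : ∀ n, eLpNorm (rsZ R P Q c n) 1 μ ≤ ENNReal.ofReal B := by
      intro n
      rw [eLpNorm_one_eq_lintegral_enorm, ← ofReal_integral_norm_eq_lintegral_enorm (hZint n)]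
      exact ENNReal.ofReal_le_ofReal (hnormbd n)
    have hsub : Submartingale (-rsZ R P Q c) ℱ μ := hZsuperM.neg
    have hbdd' : ∀ n, eLpNorm ((-rsZ R P Q c) n) 1 μ ≤ (B.toNNReal : ℝ≥0∞) := by
      intro n
      have h1 : (-rsZ R P Q c) n = -(rsZ R P Q c n) := rfl
      rw [h1, eLpNorm_neg]
      exact le_trans (hbddZ n) (le_of_eq rfl)
    have := hsub.exists_ae_tendsto_of_bdd hbdd'
    filter_upwards [this] with ω hω
    obtain ⟨l, hl⟩ := hω
    refine ⟨-l, ?_⟩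
    have : (fun n => rsZ R P Q c n ω) = fun n => -((-rsZ R P Q c) n ω) := by
      funext n; simp
    rw [this]
    simpa using hl.neg
  -- conclusion
  have hkey := ae_all_iff.2 key
  filter_upwards [hQsum, hkey] with ω hQs hZc
  obtain ⟨c, hc⟩ := exists_nat_ge (∑' k, Q k ω)
  have hSle : ∀ k, rsPsum Q (k+1) ω ≤ c := by
    intro k
    refine le_trans ?_ hc
    exact Summable.sum_le_tsum _ (fun i _ => hQ0 i ω) hQs
  obtain ⟨l, hl⟩ := hZc c
  have hYl : Tendsto (fun k => rsY R P Q k ω) atTop (𝓝 l) := by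
    have : (fun k => rsY R P Q k ω) = fun k => rsZ R P Q c k ω := by
      funext k; exact (rsZ_eq_rsY hQ0 k (hSle k)).symm
    rw [this]; exact hl
  have hStend : Tendsto (fun k => rsPsum Q k ω) atTop (𝓝 (∑' k, Q k ω)) :=
    hQs.hasSum.tendsto_sum_nat
  have hRT : Tendsto (fun k => R k ω + rsPsum P k ω) atTop (𝓝 (l + ∑' k, Q k ω)) := by
    have : (fun k => R k ω + rsPsum P k ω)
        = fun k => rsY R P Q k ω + rsPsum Q k ω := by
      funext k; unfold rsY; ring
    rw [this]
    exact hYl.add hStend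
  obtain ⟨b, hb⟩ := hRT.bddAbove_range
  have hPsummable : Summable fun k => P k ω := by
    refine summable_of_sum_range_le (c := b) (fun k => hP0 k ω) (fun n => ?_)
    have h1 : rsPsum P n ω ≤ R n ω + rsPsum P n ω := by linarith [hR0 n ω]
    have h2 : R n ω + rsPsum P n ω ≤ b := hb (Set.mem_range_self n)
    calc ∑ i ∈ Finset.range n, P i ω = rsPsum P n ω := rfl
      _ ≤ b := le_trans h1 h2
  refine ⟨hPsummable, ⟨l + ∑' k, Q k ω - ∑' k, P k ω, ?_⟩⟩
  have hTtend : Tendsto (fun k => rsPsum P k ω) atTop (𝓝 (∑' k, P k ω)) :=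
    hPsummable.hasSum.tendsto_sum_nat
  have : (fun k => R k ω) = fun k => (R k ω + rsPsum P k ω) - rsPsum P k ω := by
    funext k; ring
  rw [this]
  exact hRT.sub hTtend
end

section
/- Let g(x) = aᵀx + b be affine on ℝ^d, 0 < δ∞ ≤ δ_k with ε_k := δ_k - δ∞, and define ∇C(x) := a·(B'(g(x),δ∞) - B'(g(x),δ_k)) where B' is the derivative of the relaxed barrier. Then for any fixed x* ∈ ℝ^d and x ∈ ℝ^d, writing x̃ = x - x*: ‖∇C(x)‖ ≤ ‖a‖·(ε_k/(δ_k·δ∞))·(ĉ·δ_k·δ∞ + ‖a‖·‖x̃‖ + |b + aᵀx*|), where ĉ := max(1/δ_k, 2/(δ_k + √(δ_k·δ∞))). -/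
lemma stmt18_key (δinf εk δk chat : ℝ) (h1 : 0 < δinf) (h2 : 0 < εk)
    (hδk : δk = δinf + εk)
    (hchat : chat = max (1/δk) (2 / (δk + Real.sqrt (δk * δinf)))) (z : ℝ) :
    |(if z < -δinf then -δinf/z else (z+2*δinf)/δinf) -
     (if z < -δk then -δk/z else (z+2*δk)/δk)| ≤
      εk/(δk*δinf) * (chat*δk*δinf + |z|) := by
  have hδkpos : 0 < δk := by linarith
  have hlt : δinf < δk := by linarith
  set s := Real.sqrt (δk * δinf) with hs
  have hspos : 0 < s := Real.sqrt_pos.mpr (by positivity)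
  have hssq : s^2 = δk * δinf := Real.sq_sqrt (by positivity)
  have hchat1 : 1/δk ≤ chat := hchat ▸ le_max_left _ _
  have hchat2 : 2/(δk + s) ≤ chat := hchat ▸ le_max_right _ _
  have hchatpos : 0 < chat := lt_of_lt_of_le (by positivity) hchat1
  have hR : ∀ w : ℝ, εk/(δk*δinf) * (chat*δk*δinf + w)
      = εk*chat + εk/(δk*δinf)*w := by
    intro w; field_simp
  rw [hR]
  by_cases hz1 : z < -δk
  · have hzneg : z < 0 := by linarith
    rw [if_pos (by linarith : z < -δinf), if_pos hz1]
    have hzne : z ≠ 0 := ne_of_lt hzneg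
    have e : -δinf/z - -δk/z = εk/z := by
      field_simp; linear_combination hδk
    rw [e, abs_div, abs_of_pos h2, abs_of_neg hzneg]
    have h4 : εk / (-z) ≤ εk / δk := by
      apply div_le_div_of_nonneg_left h2.le hδkpos; linarith
    have h5 : εk / δk ≤ εk * chat := by
      calc εk / δk = εk * (1/δk) := by ring
        _ ≤ εk * chat := mul_le_mul_of_nonneg_left hchat1 h2.le
    have h6 : 0 ≤ εk/(δk*δinf)*(-z) := mul_nonneg (by positivity) (by linarith)
    linarith
  · by_cases hz2 : z < -δinf
    · -- middle case
      push_neg at hz1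
      have hzneg : z < 0 := by linarith
      rw [if_pos hz2, if_neg (not_lt.mpr hz1)]
      set t := -z with ht
      have htpos : 0 < t := by linarith [neg_pos.mpr hzneg]
      have htδinf : δinf < t := by simp only [ht]; linarith
      have htδk : t ≤ δk := by simp only [ht]; linarith
      have hzt : z = -t := by simp [ht]
      have e : -δinf/z - (z+2*δk)/δk = δinf/t + t/δk - 2 := by
        rw [hzt]; field_simp; ring
      rw [e, abs_of_neg hzneg]
      rw [abs_le]
      constructor
      · -- lower bound: 2 - δinf/t - t/δk ≤ εk*chat + εk/(δk*δinf)*t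
        set s2 := Real.sqrt (δinf/δk) with hs2
        have hs2pos : 0 < s2 := Real.sqrt_pos.mpr (by positivity)
        have hs2sq : s2^2 = δinf/δk := Real.sq_sqrt (by positivity)
        -- AM-GM: 2*s2 ≤ δinf/t + t/δk
        have hamgm : 2*s2 ≤ δinf/t + t/δk := by
          have h := two_mul_le_add_sq (Real.sqrt (δinf/t)) (Real.sqrt (t/δk))
          have e1 : Real.sqrt (δinf/t) * Real.sqrt (t/δk) = s2 := by
            rw [← Real.sqrt_mul (by positivity)]
            congr 1
            field_simp
          have e2 : Real.sqrt (δinf/t)^2 = δinf/t := Real.sq_sqrt (by positivity)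
          have e3 : Real.sqrt (t/δk)^2 = t/δk := Real.sq_sqrt (by positivity)
          calc 2*s2 = 2 * Real.sqrt (δinf/t) * Real.sqrt (t/δk) := by rw [mul_assoc, e1]
            _ ≤ Real.sqrt (δinf/t)^2 + Real.sqrt (t/δk)^2 := h
            _ = δinf/t + t/δk := by rw [e2, e3]
        -- s = s2 * δk
        have hseq : s = s2 * δk := by
          have h1' : (s2*δk)^2 = δk * δinf := by
            rw [mul_pow, hs2sq]; field_simp
          rw [hs, ← h1', Real.sqrt_sq (by positivity)]
        -- 2 - 2*s2 ≤ 2*εk/(δk+s)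
        have hmid : 2 - 2*s2 ≤ 2*εk/(δk+s) := by
          rw [le_div_iff₀ (by positivity : (0:ℝ) < δk + s)]
          have hs2δk : s2^2 * δk = δinf := by rw [hs2sq]; field_simp
          nlinarith [hseq, hs2δk]
        have h5 : 2*εk/(δk+s) ≤ εk * chat := by
          calc 2*εk/(δk+s) = εk * (2/(δk+s)) := by ring
            _ ≤ εk * chat := mul_le_mul_of_nonneg_left hchat2 h2.le
        have h6 : εk/(δk*δinf)*t = εk/(δk*δinf)*(-z) := by rw [ht]
        have h7 : 0 ≤ εk/(δk*δinf)*t := mul_nonneg (by positivity) htpos.le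
        have h8 : δinf/t + t/δk - 2 ≥ 2*s2 - 2 := by linarith
        -- goal: -(εk*chat + εk/(δk*δinf)*(-z)) ≤ δinf/t + t/δk - 2
        rw [← ht] at *
        linarith
      · -- upper bound: δinf/t + t/δk - 2 ≤ 0 ≤ RHS
        have hu1 : δinf/t ≤ 1 := by rw [div_le_one htpos]; linarith
        have hu2 : t/δk ≤ 1 := by rw [div_le_one hδkpos]; linarith
        have h6 : 0 ≤ εk/(δk*δinf)*(-z) := mul_nonneg (by positivity) (by linarith)
        have h7 : 0 ≤ εk * chat := mul_nonneg h2.le hchatpos.le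
        linarith
    · push_neg at hz2
      rw [if_neg (not_lt.mpr hz2), if_neg (by push_neg; linarith)]
      have e : (z+2*δinf)/δinf - (z+2*δk)/δk = z * εk / (δk*δinf) := by
        field_simp; linear_combination z * hδk
      rw [e, abs_div, abs_mul, abs_of_pos h2, abs_of_pos (by positivity : (0:ℝ) < δk*δinf)]
      have : |z| * εk / (δk * δinf) = εk/(δk*δinf)*|z| := by ring
      rw [this]
      nlinarith [mul_pos h2 hchatpos]

open RealInnerProductSpace in
theorem stmt_18 (d : ℕ) (δinf εk δk : ℝ) (h1 : 0 < δinf) (h2 : 0 < εk)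
    (hδk : δk = δinf + εk)
    (a : EuclideanSpace ℝ (Fin d)) (b : ℝ)
    (Bd : ℝ → ℝ → ℝ)
    (hBd : ∀ dd z : ℝ, Bd dd z = if z < -dd then -dd / z else (z + 2*dd) / dd)
    (g : EuclideanSpace ℝ (Fin d) → ℝ) (hg : ∀ x, g x = ⟪a, x⟫ + b)
    (C : EuclideanSpace ℝ (Fin d) → EuclideanSpace ℝ (Fin d))
    (hC : ∀ x, C x = (Bd δinf (g x) - Bd δk (g x)) • a)
    (chat : ℝ) (hchat : chat = max (1/δk) (2 / (δk + Real.sqrt (δk * δinf))))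
    (xs : EuclideanSpace ℝ (Fin d)) :
    ∀ x, ‖C x‖ ≤ ‖a‖ * (εk / (δk * δinf)) *
      (chat * δk * δinf + ‖a‖ * ‖x - xs‖ + |b + ⟪a, xs⟫|) := by
  intro x
  have hδkpos : 0 < δk := by linarith
  rw [hC x, norm_smul, Real.norm_eq_abs]
  have hkey := stmt18_key δinf εk δk chat h1 h2 hδk hchat (g x)
  rw [← hBd δinf (g x), ← hBd δk (g x)] at hkey
  have hgbound : |g x| ≤ ‖a‖ * ‖x - xs‖ + |b + ⟪a, xs⟫| := by
    have e : g x = ⟪a, x - xs⟫ + (b + ⟪a, xs⟫) := by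
      rw [hg, inner_sub_right]; ring
    rw [e]
    calc |⟪a, x - xs⟫ + (b + ⟪a, xs⟫)| ≤ |⟪a, x - xs⟫| + |b + ⟪a, xs⟫| := abs_add_le _ _
      _ ≤ ‖a‖ * ‖x - xs‖ + |b + ⟪a, xs⟫| := by
          have := abs_real_inner_le_norm a (x - xs)
          linarith
  have hq : 0 ≤ εk / (δk * δinf) := by positivity
  have h3 : εk/(δk*δinf) * (chat*δk*δinf + |g x|)
      ≤ εk/(δk*δinf) * (chat*δk*δinf + (‖a‖ * ‖x - xs‖ + |b + ⟪a, xs⟫|)) := by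
    apply mul_le_mul_of_nonneg_left _ hq
    linarith
  have h4 : |Bd δinf (g x) - Bd δk (g x)|
      ≤ εk/(δk*δinf) * (chat*δk*δinf + (‖a‖ * ‖x - xs‖ + |b + ⟪a, xs⟫|)) :=
    le_trans hkey h3
  calc |Bd δinf (g x) - Bd δk (g x)| * ‖a‖
      ≤ (εk/(δk*δinf) * (chat*δk*δinf + (‖a‖ * ‖x - xs‖ + |b + ⟪a, xs⟫|))) * ‖a‖ :=
        mul_le_mul_of_nonneg_right h4 (norm_nonneg a)
    _ = ‖a‖ * (εk / (δk * δinf)) * (chat * δk * δinf + ‖a‖ * ‖x - xs‖ + |b + ⟪a, xs⟫|) := by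
        ring
end
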